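/- arXiv:1609.07324 — 2 statements merged into one kernel-verified Lean document; each statement's English description precedes it below -/
import Mathlib

section
/- Let a : [0,∞) → (0,∞) be nonincreasing, strictly positive, bounded and Lipschitz continuous, and let (x^0,v^0) ∈ (ℝ^d)^N × (ℝ^d)^N with X_0 = B(x^0,x^0) and V_0 = B(v^0,v^0). If ∫_{√X_0}^{∞} a(√(2N) r) dr ≥ √V_0, then the solution of the Cucker-Smale system ẋ_i = v_i, v̇_i = (1/N) Σ_{j=1}^N a(‖x_i − x_j‖)(v_j − v_i) with initial datum (x^0,v^0) tends to consensus, i.e. ‖v_i(t) − v̄(t)‖ → 0 as t → ∞ for every i = 1,...,N. -/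
/-!
With `X = B(x,x)` and `V = B(v,v)`, Cauchy–Schwarz for `B` gives `(√X)' ≤ √V`, while the symmetry
of the interaction and `‖xᵢ - xⱼ‖ ≤ √(2N X)` give `(√V)' ≤ -a(√(2N X)) √V`. Hence
`√V + ∫_{√X₀}^{√X} a(√(2N) r) dr` is nonincreasing. If `V` stayed above some `m > 0`, the integral
would stay below `√V₀ - √m`, so by the hypothesis `√X` would stay below some `R`; the alignment
rate would then stay above `a(√(2N) R) > 0` and `V` would decrease linearly, which is absurd.
Consensus follows from `‖vᵢ - v̄‖² ≤ N V`.
-/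

open scoped BigOperators InnerProductSpace
open MeasureTheory Filter

/-- The symmetric bilinear form `B(v,w) = (1/(2N²)) ∑ᵢ∑ⱼ (vᵢ-vⱼ)·(wᵢ-wⱼ)`. -/
noncomputable def bform {d N : ℕ} (v w : Fin N → EuclideanSpace ℝ (Fin d)) : ℝ :=
  (2 * (N : ℝ) ^ 2)⁻¹ * ∑ i, ∑ j, ⟪v i - v j, w i - w j⟫_ℝ

open Set Topology

section PairwiseSums
variable {ι E : Type*} [Fintype ι] [NormedAddCommGroup E] [InnerProductSpace ℝ E]

lemma sum_sum_inner_sub_sub (p q : ι → E) :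
    ∑ i, ∑ j, ⟪p i - p j, q i - q j⟫_ℝ
      = 2 * Fintype.card ι * ∑ i, ⟪p i, q i⟫_ℝ - 2 * ⟪∑ i, p i, ∑ i, q i⟫_ℝ := by
  simp only [inner_sub_left, inner_sub_right, Finset.sum_sub_distrib, Finset.sum_const,
    Finset.card_univ, nsmul_eq_mul, sum_inner, inner_sum]
  rw [Finset.sum_comm (f := fun i j => ⟪p j, q i⟫_ℝ), ← Finset.mul_sum]
  ring

variable {A : ι → ι → ℝ}

lemma sum_sum_smul_sub_eq_zero (hA : ∀ i j, A i j = A j i) (v : ι → E) :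
    ∑ i, ∑ j, A i j • (v j - v i) = 0 := by
  simp only [smul_sub, Finset.sum_sub_distrib, sub_eq_zero]
  rw [Finset.sum_comm]
  exact Finset.sum_congr rfl fun i _ => Finset.sum_congr rfl fun j _ => by rw [hA]

lemma sum_inner_sum_smul_sub (hA : ∀ i j, A i j = A j i) (v : ι → E) :
    ∑ i, ⟪v i, ∑ j, A i j • (v j - v i)⟫_ℝ = -(2⁻¹ * ∑ i, ∑ j, A i j * ‖v j - v i‖ ^ 2) := by
  simp only [inner_sum, real_inner_smul_right]
  have hswap : ∑ i, ∑ j, A i j * ⟪v i, v j - v i⟫_ℝ = ∑ i, ∑ j, A i j * ⟪v j, v i - v j⟫_ℝ := by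
    rw [Finset.sum_comm]
    exact Finset.sum_congr rfl fun i _ => Finset.sum_congr rfl fun j _ => by rw [hA]
  have hpair (i j : ι) : ⟪v i, v j - v i⟫_ℝ + ⟪v j, v i - v j⟫_ℝ = -‖v j - v i‖ ^ 2 := by
    rw [← neg_sub (v j) (v i), inner_neg_right, ← sub_eq_add_neg, ← inner_sub_left,
      ← neg_sub (v j) (v i), inner_neg_left, real_inner_self_eq_norm_sq]
  have hsum : ∑ i, ∑ j, A i j * ⟪v i, v j - v i⟫_ℝ + ∑ i, ∑ j, A i j * ⟪v j, v i - v j⟫_ℝ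
      = -∑ i, ∑ j, A i j * ‖v j - v i‖ ^ 2 := by
    simp only [← Finset.sum_add_distrib, ← mul_add, hpair, mul_neg, Finset.sum_neg_distrib]
  linarith

end PairwiseSums

noncomputable def pairwiseDiff {d N : ℕ} (p : Fin N → EuclideanSpace ℝ (Fin d)) :
    PiLp 2 (fun _ : Fin N => PiLp 2 (fun _ : Fin N => EuclideanSpace ℝ (Fin d))) :=
  WithLp.toLp 2 fun i => WithLp.toLp 2 fun j => p i - p j

section Bform
variable {d N : ℕ}

lemma bform_eq_inner_pairwiseDiff (p q : Fin N → EuclideanSpace ℝ (Fin d)) :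
    bform p q = (2 * (N : ℝ) ^ 2)⁻¹ * ⟪pairwiseDiff p, pairwiseDiff q⟫_ℝ := by
  simp only [bform, pairwiseDiff, PiLp.inner_apply]

lemma bform_self_nonneg (p : Fin N → EuclideanSpace ℝ (Fin d)) : 0 ≤ bform p p := by
  rw [bform_eq_inner_pairwiseDiff]
  exact mul_nonneg (by positivity) real_inner_self_nonneg

lemma bform_le_sqrt_mul_sqrt (p q : Fin N → EuclideanSpace ℝ (Fin d)) :
    bform p q ≤ √(bform p p) * √(bform q q) := by
  simp only [bform_eq_inner_pairwiseDiff, real_inner_self_eq_norm_sq]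
  set c : ℝ := (2 * (N : ℝ) ^ 2)⁻¹
  have hc : 0 ≤ c := by positivity
  rw [Real.sqrt_mul hc, Real.sqrt_mul hc, Real.sqrt_sq (norm_nonneg _),
    Real.sqrt_sq (norm_nonneg _)]
  calc c * ⟪pairwiseDiff p, pairwiseDiff q⟫_ℝ
      ≤ c * (‖pairwiseDiff p‖ * ‖pairwiseDiff q‖) := by gcongr; exact real_inner_le_norm _ _
    _ = √c * ‖pairwiseDiff p‖ * (√c * ‖pairwiseDiff q‖) := by
      linear_combination (‖pairwiseDiff p‖ * ‖pairwiseDiff q‖) * (Real.mul_self_sqrt hc).symm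

lemma bform_sub_const (p q : Fin N → EuclideanSpace ℝ (Fin d)) (c c' : EuclideanSpace ℝ (Fin d)) :
    bform (fun i => p i - c) (fun i => q i - c') = bform p q := by
  simp only [bform, sub_sub_sub_cancel_right]

lemma bform_eq_of_sum_eq_zero (p q : Fin N → EuclideanSpace ℝ (Fin d)) (hq : ∑ i, q i = 0) :
    bform p q = (N : ℝ)⁻¹ * ∑ i, ⟪p i, q i⟫_ℝ := by
  rw [bform, sum_sum_inner_sub_sub, hq, inner_zero_right, Fintype.card_fin]
  rcases eq_or_ne (N : ℝ) 0 with hN | hN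
  · simp [hN]
  · field_simp
    ring

lemma sum_sub_mean_eq_zero (p : Fin N → EuclideanSpace ℝ (Fin d)) :
    ∑ i, (p i - (N : ℝ)⁻¹ • ∑ j, p j) = 0 := by
  rcases Nat.eq_zero_or_pos N with rfl | hN
  · simp
  · rw [Finset.sum_sub_distrib, Finset.sum_const, Finset.card_univ, Fintype.card_fin,
      ← Nat.cast_smul_eq_nsmul ℝ, smul_smul, mul_inv_cancel₀ (by positivity), one_smul, sub_self]

lemma bform_self_eq_sum_norm_sub_mean_sq (p : Fin N → EuclideanSpace ℝ (Fin d)) :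
    bform p p = (N : ℝ)⁻¹ * ∑ i, ‖p i - (N : ℝ)⁻¹ • ∑ j, p j‖ ^ 2 := by
  rw [← bform_sub_const p p ((N : ℝ)⁻¹ • ∑ j, p j) ((N : ℝ)⁻¹ • ∑ j, p j),
    bform_eq_of_sum_eq_zero _ _ (sum_sub_mean_eq_zero p)]
  simp only [real_inner_self_eq_norm_sq]

lemma norm_sub_mean_sq_le (p : Fin N → EuclideanSpace ℝ (Fin d)) (i : Fin N) :
    ‖p i - (N : ℝ)⁻¹ • ∑ j, p j‖ ^ 2 ≤ N * bform p p := by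
  rw [bform_self_eq_sum_norm_sub_mean_sq, mul_inv_cancel_left₀ (by exact_mod_cast i.pos.ne')]
  exact Finset.single_le_sum (fun j _ => sq_nonneg ‖p j - (N : ℝ)⁻¹ • ∑ k, p k‖)
    (Finset.mem_univ i)

lemma norm_sub_le_sqrt_mul_sqrt_bform (p : Fin N → EuclideanSpace ℝ (Fin d)) (i j : Fin N) :
    ‖p i - p j‖ ≤ √(2 * N) * √(bform p p) := by
  rw [← Real.sqrt_mul (by positivity)]
  refine Real.le_sqrt_of_sq_le ?_
  rcases eq_or_ne i j with rfl | hij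
  · simpa using mul_nonneg (by positivity) (bform_self_nonneg p)
  set c := (N : ℝ)⁻¹ • ∑ k, p k
  have htri : ‖p i - p j‖ ≤ ‖p i - c‖ + ‖p j - c‖ := by
    simpa only [norm_sub_rev c] using norm_sub_le_norm_sub_add_norm_sub (p i) c (p j)
  have hpair : ‖p i - c‖ ^ 2 + ‖p j - c‖ ^ 2 ≤ N * bform p p := by
    rw [bform_self_eq_sum_norm_sub_mean_sq, mul_inv_cancel_left₀ (by exact_mod_cast i.pos.ne'),
      ← Finset.sum_pair (f := fun k => ‖p k - c‖ ^ 2) hij]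
    exact Finset.sum_le_sum_of_subset_of_nonneg (Finset.subset_univ _)
      fun k _ _ => sq_nonneg ‖p k - c‖
  nlinarith [norm_nonneg (p i - p j), sq_nonneg (‖p i - c‖ - ‖p j - c‖)]

end Bform

section Dynamics
variable {d N : ℕ}

lemma hasDerivAt_bform_self {f : ℝ → Fin N → EuclideanSpace ℝ (Fin d)}
    {f' : Fin N → EuclideanSpace ℝ (Fin d)} {t : ℝ}
    (hf : ∀ i, HasDerivAt (fun s => f s i) (f' i) t) :
    HasDerivAt (fun s => bform (f s) (f s)) (2 * bform (f t) f') t := by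
  have hpair (i j : Fin N) : HasDerivAt (fun s => ⟪f s i - f s j, f s i - f s j⟫_ℝ)
      (2 * ⟪f t i - f t j, f' i - f' j⟫_ℝ) t := by
    have h := (hf i).sub (hf j)
    have := h.inner ℝ h
    rwa [real_inner_comm _ (f' i - f' j), ← two_mul] at this
  refine ((HasDerivAt.fun_sum (u := Finset.univ) fun i _ =>
    HasDerivAt.fun_sum (u := Finset.univ) fun j _ => hpair i j).const_mul
      (2 * (N : ℝ) ^ 2)⁻¹).congr_deriv ?_
  simp only [bform, ← Finset.mul_sum]
  ring

lemma bform_smul_sum_smul_sub_le {A : Fin N → Fin N → ℝ} {α : ℝ} (hA : ∀ i j, A i j = A j i)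
    (hα : ∀ i j, α ≤ A i j) (v : Fin N → EuclideanSpace ℝ (Fin d)) :
    bform v (fun i => (N : ℝ)⁻¹ • ∑ j, A i j • (v j - v i)) ≤ -(α * bform v v) := by
  have hsum : ∑ i, (N : ℝ)⁻¹ • ∑ j, A i j • (v j - v i) = 0 := by
    rw [← Finset.smul_sum, sum_sum_smul_sub_eq_zero hA, smul_zero]
  have hvv : bform v v = (2 * (N : ℝ) ^ 2)⁻¹ * ∑ i, ∑ j, ‖v j - v i‖ ^ 2 := by
    rw [bform]
    congr 1
    exact Finset.sum_congr rfl fun i _ => Finset.sum_congr rfl fun j _ => by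
      rw [real_inner_self_eq_norm_sq, norm_sub_rev]
  have henergy : α * ∑ i, ∑ j, ‖v j - v i‖ ^ 2 ≤ ∑ i, ∑ j, A i j * ‖v j - v i‖ ^ 2 := by
    simp only [Finset.mul_sum]
    exact Finset.sum_le_sum fun i _ => Finset.sum_le_sum fun j _ =>
      mul_le_mul_of_nonneg_right (hα i j) (sq_nonneg _)
  rw [bform_eq_of_sum_eq_zero _ _ hsum, hvv]
  simp only [real_inner_smul_right, ← Finset.mul_sum, sum_inner_sum_smul_sub hA]
  calc (N : ℝ)⁻¹ * ((N : ℝ)⁻¹ * -(2⁻¹ * ∑ i, ∑ j, A i j * ‖v j - v i‖ ^ 2))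
      = -((2 * (N : ℝ) ^ 2)⁻¹ * ∑ i, ∑ j, A i j * ‖v j - v i‖ ^ 2) := by ring
    _ ≤ -((2 * (N : ℝ) ^ 2)⁻¹ * (α * ∑ i, ∑ j, ‖v j - v i‖ ^ 2)) := by gcongr
    _ = -(α * ((2 * (N : ℝ) ^ 2)⁻¹ * ∑ i, ∑ j, ‖v j - v i‖ ^ 2)) := by ring

lemma bform_cuckerSmale_field_le {a : ℝ → ℝ} (ha : ∀ r s, 0 ≤ r → r ≤ s → a s ≤ a r)
    (x v : Fin N → EuclideanSpace ℝ (Fin d)) :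
    bform v (fun i => (N : ℝ)⁻¹ • ∑ j, a ‖x i - x j‖ • (v j - v i))
      ≤ -(a (√(2 * N) * √(bform x x)) * bform v v) :=
  bform_smul_sum_smul_sub_le (fun i j => by rw [norm_sub_rev])
    (fun i j => ha _ _ (norm_nonneg _) (norm_sub_le_sqrt_mul_sqrt_bform x i j)) v

end Dynamics

lemma antitoneOn_of_hasDerivAt_nonpos {D : Set ℝ} (hD : Convex ℝ D) {f f' : ℝ → ℝ}
    (hf : ∀ t ∈ D, HasDerivAt f (f' t) t) (hf' : ∀ t ∈ D, f' t ≤ 0) : AntitoneOn f D :=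
  antitoneOn_of_hasDerivWithinAt_nonpos hD
    (fun t ht => (hf t ht).continuousAt.continuousWithinAt)
    (fun t ht => (hf t (interior_subset ht)).hasDerivWithinAt)
    fun t ht => hf' t (interior_subset ht)

lemma exists_lt_intervalIntegral_of_ofReal_lt_lintegral {g : ℝ → ℝ} {r₀ c : ℝ}
    (hg : Continuous g) (hg_nonneg : ∀ r, r₀ < r → 0 ≤ g r)
    (hc : ENNReal.ofReal c < ∫⁻ r in Ioi r₀, ENNReal.ofReal (g r)) :
    ∃ R, r₀ ≤ R ∧ c < ∫ r in r₀..R, g r := by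
  by_contra! hle
  refine hc.not_ge ?_
  have hunion : ⋃ n : ℕ, Ioc r₀ (r₀ + n) = Ioi r₀ :=
    iUnion_Ioc_eq_Ioi_self_iff.2 fun r _ =>
      (exists_nat_ge (r - r₀)).imp fun n hn => by linarith
  rw [← hunion, setLIntegral_iUnion_of_directed _
    (Monotone.directed_le fun m n hmn => Ioc_subset_Ioc_right (by gcongr))]
  refine iSup_le fun n => ?_
  have hR : r₀ ≤ r₀ + n := le_add_of_nonneg_right n.cast_nonneg
  rw [← ofReal_integral_eq_lintegral_ofReal hg.integrableOn_Ioc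
    (ae_restrict_of_forall_mem measurableSet_Ioc fun r hr => hg_nonneg r hr.1),
    ← intervalIntegral.integral_of_le hR]
  exact ENNReal.ofReal_le_ofReal (hle _ hR)

lemma lyapunov_deriv_nonpos {v x v' x' ε gx gb : ℝ} (hv : 0 < v) (hx : 0 ≤ x) (hε : 0 < ε)
    (hgb : 0 ≤ gb) (hg : gb ≤ gx) (hv' : v' ≤ -(2 * gx * v)) (hx' : x' ≤ 2 * √x * √v) :
    v' / (2 * √v) + gb * (x' / (2 * √(x + ε))) ≤ 0 := by
  have hsv : 0 < √v := Real.sqrt_pos.2 hv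
  have hsb : 0 < √(x + ε) := Real.sqrt_pos.2 (by linarith)
  have hV : v' / (2 * √v) ≤ -(gb * √v) := by
    rw [div_le_iff₀ (by positivity)]
    nlinarith [Real.mul_self_sqrt hv.le]
  have hX : x' / (2 * √(x + ε)) ≤ √v := by
    rw [div_le_iff₀ (by positivity)]
    nlinarith [Real.sqrt_le_sqrt (by linarith : x ≤ x + ε)]
  nlinarith [mul_le_mul_of_nonneg_left hX hgb]

/-- Ha–Ha–Kim's dissipative differential inequalities `(√X)' ≤ √V`, `(√V)' ≤ -g(√X) √V` for
`X = B(x,x)` and `V = B(v,v)`, stated for `X` and `V` themselves since their square roots need not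
be differentiable where they vanish. -/
structure DissipativeInequalities (V X V' X' g : ℝ → ℝ) : Prop where
  hasDerivAt_V : ∀ t, 0 ≤ t → HasDerivAt V (V' t) t
  hasDerivAt_X : ∀ t, 0 ≤ t → HasDerivAt X (X' t) t
  V_nonneg : ∀ t, 0 ≤ t → 0 ≤ V t
  X_nonneg : ∀ t, 0 ≤ t → 0 ≤ X t
  deriv_X_le : ∀ t, 0 ≤ t → X' t ≤ 2 * √(X t) * √(V t)
  deriv_V_le : ∀ t, 0 ≤ t → V' t ≤ -(2 * g (√(X t)) * V t)

namespace DissipativeInequalities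
variable {V X V' X' g : ℝ → ℝ}

lemma antitoneOn (h : DissipativeInequalities V X V' X' g) (hg : ∀ r, 0 ≤ r → 0 ≤ g r) :
    AntitoneOn V (Ici 0) :=
  antitoneOn_of_hasDerivAt_nonpos (convex_Ici 0) h.hasDerivAt_V fun t ht =>
    (h.deriv_V_le t ht).trans <| neg_nonpos.2 <|
      mul_nonneg (mul_nonneg zero_le_two (hg _ (Real.sqrt_nonneg _))) (h.V_nonneg t ht)

lemma sqrt_add_integral_le (h : DissipativeInequalities V X V' X' g) (hg : Continuous g)
    (hg_nonneg : ∀ r, 0 ≤ r → 0 ≤ g r) (hg_anti : AntitoneOn g (Ici 0))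
    (hV_pos : ∀ t, 0 ≤ t → 0 < V t) {t : ℝ} (ht : 0 ≤ t) :
    √(V t) + ∫ r in √(X 0)..√(X t), g r ≤ √(V 0) := by
  set Φ : ℝ → ℝ := fun u => ∫ r in √(X 0)..u, g r
  have hΦ (u : ℝ) : HasDerivAt Φ (g u) u := (hg.integral_hasStrictDerivAt _ u).hasDerivAt
  -- `√(X + ε)` is differentiable for `ε > 0`; the estimate for `ε = 0` follows by continuity
  have hmono (ε : ℝ) (hε : 0 < ε) :
      √(V t) + Φ (√(X t + ε)) ≤ √(V 0) + Φ (√(X 0 + ε)) := by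
    refine antitoneOn_of_hasDerivAt_nonpos (convex_Ici 0) (f := fun s => √(V s) + Φ √(X s + ε))
      (f' := fun s => V' s / (2 * √(V s)) + g √(X s + ε) * (X' s / (2 * √(X s + ε))))
      (fun s hs => ?_) (fun s hs => ?_) self_mem_Ici ht ht
    · have hXε : X s + ε ≠ 0 := by linarith [h.X_nonneg s hs]
      exact ((h.hasDerivAt_V s hs).sqrt (hV_pos s hs).ne').add
        ((hΦ _).comp s (((h.hasDerivAt_X s hs).add_const ε).sqrt hXε))
    · exact lyapunov_deriv_nonpos (hV_pos s hs) (h.X_nonneg s hs) hε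
        (hg_nonneg _ (Real.sqrt_nonneg _))
        (hg_anti (Real.sqrt_nonneg _) (Real.sqrt_nonneg _) (Real.sqrt_le_sqrt (by linarith)))
        (h.deriv_V_le s hs) (h.deriv_X_le s hs)
  have hlim (s : ℝ) : Tendsto (fun ε => Φ √(X s + ε)) (𝓝[>] 0) (𝓝 (Φ √(X s))) := by
    have hcont : Continuous fun ε => Φ √(X s + ε) :=
      (continuous_iff_continuousAt.2 fun u => (hΦ u).continuousAt).comp
        (Real.continuous_sqrt.comp (continuous_const_add (X s)))
    simpa using (hcont.tendsto 0).mono_left nhdsWithin_le_nhds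
  simpa [Φ] using le_of_tendsto_of_tendsto ((hlim t).const_add _) ((hlim 0).const_add _)
    (eventually_nhdsWithin_of_forall hmono)

lemma exists_lt (h : DissipativeInequalities V X V' X' g) (hg : Continuous g)
    (hg_pos : ∀ r, 0 ≤ r → 0 < g r) (hg_anti : AntitoneOn g (Ici 0))
    (hint : ENNReal.ofReal √(V 0) ≤ ∫⁻ r in Ioi √(X 0), ENNReal.ofReal (g r))
    {m : ℝ} (hm : 0 < m) : ∃ t, 0 ≤ t ∧ V t < m := by
  by_contra! hmV
  have hV_pos (t : ℝ) (ht : 0 ≤ t) : 0 < V t := hm.trans_le (hmV t ht)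
  have hg_nonneg (r : ℝ) (hr : 0 ≤ r) : 0 ≤ g r := (hg_pos r hr).le
  have hsqrt_m : 0 < √m := Real.sqrt_pos.2 hm
  obtain ⟨R, hR, hΦR⟩ := exists_lt_intervalIntegral_of_ofReal_lt_lintegral (c := √(V 0) - √m) hg
    (fun r hr => hg_nonneg r ((Real.sqrt_nonneg _).trans hr.le))
    (((ENNReal.ofReal_lt_ofReal_iff (Real.sqrt_pos.2 (hV_pos 0 le_rfl))).2
      (by linarith)).trans_le hint)
  have hR₀ : 0 ≤ R := (Real.sqrt_nonneg _).trans hR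
  have hXR (t : ℝ) (ht : 0 ≤ t) : √(X t) ≤ R := by
    by_contra! hRX
    have hΦ := h.sqrt_add_integral_le hg hg_nonneg hg_anti hV_pos ht
    have hΦ_mono : ∫ r in √(X 0)..R, g r ≤ ∫ r in √(X 0)..√(X t), g r :=
      intervalIntegral.integral_mono_interval le_rfl hR hRX.le
        (ae_restrict_of_forall_mem measurableSet_Ioc fun r hr =>
          hg_nonneg r ((Real.sqrt_nonneg _).trans hr.1.le))
        (hg.intervalIntegrable _ _)
    linarith [Real.sqrt_le_sqrt (hmV t ht)]
  -- inside the ball `√X ≤ R` the decay rate of `V` is at least `2 g(R) m`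
  set c := 2 * g R * m
  have hc : 0 < c := by have := hg_pos R hR₀; positivity
  have hdecay : AntitoneOn (fun t => V t + c * t) (Ici 0) := by
    refine antitoneOn_of_hasDerivAt_nonpos (convex_Ici 0)
      (fun t ht => (h.hasDerivAt_V t ht).add ((hasDerivAt_id t).const_mul c)) fun t ht => ?_
    have hgR : g R ≤ g √(X t) := hg_anti (Real.sqrt_nonneg _) hR₀ (hXR t ht)
    nlinarith [h.deriv_V_le t ht, hmV t ht, hg_pos R hR₀]
  have hT : 0 ≤ V 0 / c := div_nonneg (h.V_nonneg 0 le_rfl) hc.le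
  have := hdecay self_mem_Ici hT hT
  simp only [mul_div_cancel₀ _ hc.ne', mul_zero, add_zero] at this
  linarith [hmV _ hT]

lemma tendsto_atTop_zero (h : DissipativeInequalities V X V' X' g) (hg : Continuous g)
    (hg_pos : ∀ r, 0 ≤ r → 0 < g r) (hg_anti : AntitoneOn g (Ici 0))
    (hint : ENNReal.ofReal √(V 0) ≤ ∫⁻ r in Ioi √(X 0), ENNReal.ofReal (g r)) :
    Tendsto V atTop (𝓝 0) := by
  have hanti := h.antitoneOn fun r hr => (hg_pos r hr).le
  refine tendsto_order.2 ⟨fun b hb => eventually_atTop.2 ⟨0, fun t ht =>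
    hb.trans_le (h.V_nonneg t ht)⟩, fun b hb => ?_⟩
  obtain ⟨t₀, ht₀, hVt₀⟩ := h.exists_lt hg hg_pos hg_anti hint hb
  exact eventually_atTop.2 ⟨t₀, fun t ht => (hanti ht₀ (ht₀.trans ht) ht).trans_lt hVt₀⟩

end DissipativeInequalities

theorem cuckerSmale_consensus_of_initial_condition_general
    {d N : ℕ}
    (a : ℝ → ℝ)
    (ha_pos : ∀ r, 0 ≤ r → 0 < a r)
    (ha_mono : ∀ r s, 0 ≤ r → r ≤ s → a s ≤ a r)
    (ha_lip : ∃ K : NNReal, LipschitzWith K a)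
    (x0 v0 : Fin N → EuclideanSpace ℝ (Fin d))
    -- the consensus-region condition ∫_{√X₀}^∞ a(√(2N) r) dr ≥ √V₀
    (hinit : ENNReal.ofReal (Real.sqrt (bform v0 v0)) ≤
      ∫⁻ r in Set.Ioi (Real.sqrt (bform x0 x0)),
        ENNReal.ofReal (a (Real.sqrt (2 * N) * r)))
    (x v : ℝ → Fin N → EuclideanSpace ℝ (Fin d))
    (hx0 : x 0 = x0) (hv0 : v 0 = v0)
    (hx : ∀ (i : Fin N), ∀ t, 0 ≤ t → HasDerivAt (fun s => x s i) (v t i) t)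
    (hv : ∀ (i : Fin N), ∀ t, 0 ≤ t → HasDerivAt (fun s => v s i)
      ((N : ℝ)⁻¹ • ∑ j, a ‖x t i - x t j‖ • (v t j - v t i)) t) :
    ∀ i, Tendsto (fun t => ‖v t i - (N : ℝ)⁻¹ • ∑ j, v t j‖) atTop (nhds 0) := by
  subst hx0 hv0
  obtain ⟨K, hK⟩ := ha_lip
  have hsys : DissipativeInequalities (fun t => bform (v t) (v t)) (fun t => bform (x t) (x t))
      (fun t => 2 * bform (v t) fun i => (N : ℝ)⁻¹ • ∑ j, a ‖x t i - x t j‖ • (v t j - v t i))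
      (fun t => 2 * bform (x t) (v t)) (fun r => a (√(2 * N) * r)) :=
    { hasDerivAt_V := fun t ht => hasDerivAt_bform_self fun i => hv i t ht
      hasDerivAt_X := fun t ht => hasDerivAt_bform_self fun i => hx i t ht
      V_nonneg := fun t _ => bform_self_nonneg (v t)
      X_nonneg := fun t _ => bform_self_nonneg (x t)
      deriv_X_le := fun t _ => by linarith [bform_le_sqrt_mul_sqrt (x t) (v t)]
      deriv_V_le := fun t _ => by linarith [bform_cuckerSmale_field_le ha_mono (x t) (v t)] }
  have hV := hsys.tendsto_atTop_zero (hK.continuous.comp (continuous_const_mul _))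
    (fun r hr => ha_pos _ (by positivity))
    (fun r hr s _ hrs => ha_mono _ _ (mul_nonneg (Real.sqrt_nonneg _) hr) (by gcongr)) hinit
  intro i
  refine squeeze_zero (fun t => norm_nonneg _)
    (fun t => Real.le_sqrt_of_sq_le (norm_sub_mean_sq_le (v t) i)) ?_
  simpa using (hV.const_mul (N : ℝ)).sqrt

/-- **Ha-Ha-Kim.** If `∫_{√X₀}^∞ a(√(2N) r) dr ≥ √V₀`, then the
solution of the Cucker-Smale system with initial datum `(x⁰,v⁰)` tends to consensus. -/
theorem cuckerSmale_consensus_of_initial_condition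
    {d N : ℕ} (hN : 0 < N)
    (a : ℝ → ℝ)
    (ha_pos : ∀ r, 0 ≤ r → 0 < a r)
    (ha_mono : ∀ r s, 0 ≤ r → r ≤ s → a s ≤ a r)
    (ha_bdd : ∃ C, ∀ r, 0 ≤ r → a r ≤ C)
    (ha_lip : ∃ K : NNReal, LipschitzWith K a)
    (x0 v0 : Fin N → EuclideanSpace ℝ (Fin d))
    -- the consensus-region condition ∫_{√X₀}^∞ a(√(2N) r) dr ≥ √V₀
    (hinit : ENNReal.ofReal (Real.sqrt (bform v0 v0)) ≤
      ∫⁻ r in Set.Ioi (Real.sqrt (bform x0 x0)),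
        ENNReal.ofReal (a (Real.sqrt (2 * N) * r)))
    (x v : ℝ → Fin N → EuclideanSpace ℝ (Fin d))
    (hx0 : x 0 = x0) (hv0 : v 0 = v0)
    (hx : ∀ (i : Fin N), ∀ t, 0 ≤ t → HasDerivAt (fun s => x s i) (v t i) t)
    (hv : ∀ (i : Fin N), ∀ t, 0 ≤ t → HasDerivAt (fun s => v s i)
      ((N : ℝ)⁻¹ • ∑ j, a ‖x t i - x t j‖ • (v t j - v t i)) t) :
    ∀ i, Tendsto (fun t => ‖v t i - (N : ℝ)⁻¹ • ∑ j, v t j‖) atTop (nhds 0) :=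
  cuckerSmale_consensus_of_initial_condition_general a ha_pos ha_mono ha_lip x0 v0 hinit x v hx0 hv0
    hx hv
end

section
/- Let (x,v) be a solution of the perturbed Cucker-Smale system ẋ_i = v_i, v̇_i = (1/N) Σ_{j=1}^N a(‖x_i − x_j‖)(v_j − v_i) + α(t)(v̄ − v_i) + β(t) Δ_i(t) with β(t) > 0. For every i = 1,...,N let ε_i : [0,∞) → [0,ℓ] with ℓ < (min_{t≥0} α(t)) / (max_{t≥0} β(t)). If there exists T ≥ 0 such that ‖Δ_i(t)‖ ≤ ε_i(t) ‖v_i^⊥(t)‖ for every t ≥ T and every i = 1,...,N, then (x,v) tends to consensus. -/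
/-! The velocity variance `E = ∑ᵢ ‖vᵢ - v̄‖²` is a Lyapunov function. The alignment term only
dissipates it, because its kernel `a(‖xᵢ - xⱼ‖)` is symmetric in `i, j`; the damping term removes
at least `2 αmin E` and the perturbation adds at most `2 βmax ℓ E`. Hence
`E' ≤ -2 (αmin - βmax ℓ) E` after time `T`, and `E` decays exponentially by Grönwall. -/

open scoped BigOperators InnerProductSpace
open MeasureTheory Filter

noncomputable def meanVec {d N : ℕ} (v : Fin N → EuclideanSpace ℝ (Fin d)) :
    EuclideanSpace ℝ (Fin d) :=
  (N : ℝ)⁻¹ • ∑ i, v i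

open Set Real Topology

lemma le_mul_exp_of_hasDerivAt_le_neg_mul {E E' : ℝ → ℝ} {c T : ℝ}
    (hE : ∀ t ≥ T, HasDerivAt E (E' t) t) (hbound : ∀ t ≥ T, E' t ≤ -c * E t)
    {t : ℝ} (ht : T ≤ t) :
    E t ≤ E T * exp (-c * (t - T)) := by
  simpa only [gronwallBound_ε0] using
    le_gronwallBound_of_liminf_deriv_right_le (ε := 0) (b := t)
      (fun s hs => (hE s hs.1).continuousAt.continuousWithinAt)
      (fun s hs _ hr => (hE s hs.1).hasDerivWithinAt.liminf_right_slope_le hr)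
      le_rfl (fun s hs => by simpa using hbound s hs.1) t ⟨ht, le_rfl⟩

lemma tendsto_zero_of_hasDerivAt_le_neg_mul {E E' : ℝ → ℝ} {c T : ℝ} (hc : 0 < c)
    (hE_nonneg : ∀ t, 0 ≤ E t) (hE : ∀ t ≥ T, HasDerivAt E (E' t) t)
    (hbound : ∀ t ≥ T, E' t ≤ -c * E t) :
    Tendsto E atTop (𝓝 0) := by
  have hexp : Tendsto (fun t => E T * exp (-c * (t - T))) atTop (𝓝 0) := by
    have h : Tendsto (fun t => -c * (t - T)) atTop atBot :=
      (tendsto_id.atTop_add tendsto_const_nhds).const_mul_atTop_of_neg (neg_lt_zero.2 hc)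
    simpa using (tendsto_exp_atBot.comp h).const_mul (E T)
  exact squeeze_zero' (Eventually.of_forall hE_nonneg)
    ((eventually_ge_atTop T).mono fun t ht =>
      le_mul_exp_of_hasDerivAt_le_neg_mul hE hbound ht) hexp

lemma sum_inner_sum_smul_sub_nonpos {ι E : Type*} [Fintype ι] [NormedAddCommGroup E]
    [InnerProductSpace ℝ E] (b : ι → ι → ℝ) (hb_symm : ∀ i j, b i j = b j i)
    (hb : ∀ i j, 0 ≤ b i j) (w : ι → E) :
    ∑ i, ⟪w i, ∑ j, b i j • (w j - w i)⟫_ℝ ≤ 0 := by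
  set S := ∑ i, ⟪w i, ∑ j, b i j • (w j - w i)⟫_ℝ
  have hS : S = ∑ i, ∑ j, b i j * ⟪w i, w j - w i⟫_ℝ := by
    simp only [S, inner_sum, real_inner_smul_right]
  have hS_swap : S = ∑ i, ∑ j, b i j * ⟪w j, w i - w j⟫_ℝ := by
    rw [hS, Finset.sum_comm]
    simp only [hb_symm]
  have h2S : ∑ i, ∑ j, b i j * ⟪w i, w j - w i⟫_ℝ + ∑ i, ∑ j, b i j * ⟪w j, w i - w j⟫_ℝ
      = -∑ i, ∑ j, b i j * ‖w i - w j‖ ^ 2 := by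
    rw [← Finset.sum_add_distrib, ← Finset.sum_neg_distrib]
    refine Finset.sum_congr rfl fun i _ => ?_
    rw [← Finset.sum_add_distrib, ← Finset.sum_neg_distrib]
    refine Finset.sum_congr rfl fun j _ => ?_
    rw [← real_inner_self_eq_norm_sq]
    simp only [inner_sub_left, inner_sub_right, real_inner_comm (w i) (w j)]
    ring
  have h_dist : 0 ≤ ∑ i, ∑ j, b i j * ‖w i - w j‖ ^ 2 :=
    Finset.sum_nonneg fun i _ => Finset.sum_nonneg fun j _ => mul_nonneg (hb i j) (sq_nonneg _)
  linarith

lemma inner_smul_neg_add_smul_le {E : Type*} [NormedAddCommGroup E] [InnerProductSpace ℝ E]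
    {w Δ : E} {α β αmin βmax ε ℓ : ℝ} (hα : αmin ≤ α) (hβ : 0 ≤ β) (hβmax : β ≤ βmax)
    (hε : ε ∈ Icc 0 ℓ) (hΔ : ‖Δ‖ ≤ ε * ‖w‖) :
    ⟪w, α • (-w) + β • Δ⟫_ℝ ≤ -(αmin - βmax * ℓ) * ‖w‖ ^ 2 := by
  have hwΔ : ⟪w, Δ⟫_ℝ ≤ ε * ‖w‖ ^ 2 :=
    calc ⟪w, Δ⟫_ℝ ≤ ‖w‖ * ‖Δ‖ := real_inner_le_norm _ _
      _ ≤ ‖w‖ * (ε * ‖w‖) := by gcongr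
      _ = ε * ‖w‖ ^ 2 := by ring
  have hβε : β * ε ≤ βmax * ℓ := mul_le_mul hβmax hε.2 hε.1 (hβ.trans hβmax)
  calc ⟪w, α • (-w) + β • Δ⟫_ℝ = -α * ‖w‖ ^ 2 + β * ⟪w, Δ⟫_ℝ := by
        rw [inner_add_right, real_inner_smul_right, real_inner_smul_right, inner_neg_right,
          real_inner_self_eq_norm_sq]
        ring
    _ ≤ -αmin * ‖w‖ ^ 2 + (β * ε) * ‖w‖ ^ 2 := by
        rw [mul_assoc]
        gcongr
    _ ≤ -αmin * ‖w‖ ^ 2 + (βmax * ℓ) * ‖w‖ ^ 2 := by gcongr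
    _ = -(αmin - βmax * ℓ) * ‖w‖ ^ 2 := by ring

section CuckerSmale

variable {d N : ℕ}

noncomputable def deviationEnergy (v : Fin N → EuclideanSpace ℝ (Fin d)) : ℝ :=
  ∑ i, ‖v i - meanVec v‖ ^ 2

lemma deviationEnergy_nonneg (v : Fin N → EuclideanSpace ℝ (Fin d)) : 0 ≤ deviationEnergy v :=
  Finset.sum_nonneg fun _ _ => sq_nonneg _

lemma norm_sub_meanVec_le_sqrt_deviationEnergy (v : Fin N → EuclideanSpace ℝ (Fin d))
    (i : Fin N) : ‖v i - meanVec v‖ ≤ √(deviationEnergy v) :=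
  (Real.le_sqrt (norm_nonneg _) (deviationEnergy_nonneg v)).2 <|
    Finset.single_le_sum (f := fun j => ‖v j - meanVec v‖ ^ 2)
      (fun _ _ => sq_nonneg _) (Finset.mem_univ i)

lemma sum_sub_meanVec (v : Fin N → EuclideanSpace ℝ (Fin d)) : ∑ i, (v i - meanVec v) = 0 := by
  rcases N.eq_zero_or_pos with rfl | hN
  · simp
  rw [Finset.sum_sub_distrib, Finset.sum_const, Finset.card_univ, Fintype.card_fin,
    ← Nat.cast_smul_eq_nsmul ℝ, meanVec, smul_smul, mul_inv_cancel₀ (by positivity), one_smul,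
    sub_self]

lemma hasDerivAt_deviationEnergy {v : ℝ → Fin N → EuclideanSpace ℝ (Fin d)}
    {F : Fin N → EuclideanSpace ℝ (Fin d)} {t : ℝ}
    (hv : ∀ i, HasDerivAt (fun s => v s i) (F i) t) :
    HasDerivAt (fun s => deviationEnergy (v s)) (2 * ∑ i, ⟪v t i - meanVec (v t), F i⟫_ℝ) t := by
  have hmean : HasDerivAt (fun s => meanVec (v s)) (meanVec F) t :=
    (HasDerivAt.fun_sum fun i _ => hv i).fun_const_smul _
  have h : HasDerivAt (fun s => ∑ i, ‖v s i - meanVec (v s)‖ ^ 2)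
      (∑ i, 2 * ⟪v t i - meanVec (v t), F i - meanVec F⟫_ℝ) t :=
    HasDerivAt.fun_sum fun i _ => ((hv i).fun_sub hmean).norm_sq
  refine h.congr_deriv ?_
  -- the derivative of the mean drops out because the deviations sum to zero
  have hcancel : ∑ i, ⟪v t i - meanVec (v t), meanVec F⟫_ℝ = 0 := by
    rw [← sum_inner, sum_sub_meanVec, inner_zero_left]
  simp only [inner_sub_right, mul_sub, Finset.sum_sub_distrib, ← Finset.mul_sum, hcancel,
    mul_zero, sub_zero]

noncomputable def perturbedCSField (a : ℝ → ℝ) (α β : ℝ)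
    (x v Δ : Fin N → EuclideanSpace ℝ (Fin d)) (i : Fin N) : EuclideanSpace ℝ (Fin d) :=
  (N : ℝ)⁻¹ • ∑ j, a ‖x i - x j‖ • (v j - v i) + α • (meanVec v - v i) + β • Δ i

lemma sum_inner_perturbedCSField_le {a : ℝ → ℝ} {α β αmin βmax ℓ : ℝ}
    {x v Δ : Fin N → EuclideanSpace ℝ (Fin d)} {ε : Fin N → ℝ}
    (ha : ∀ r, 0 ≤ r → 0 ≤ a r) (hα : αmin ≤ α) (hβ : 0 ≤ β) (hβmax : β ≤ βmax)
    (hε : ∀ i, ε i ∈ Icc 0 ℓ) (hΔ : ∀ i, ‖Δ i‖ ≤ ε i * ‖v i - meanVec v‖) :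
    ∑ i, ⟪v i - meanVec v, perturbedCSField a α β x v Δ i⟫_ℝ
      ≤ -(αmin - βmax * ℓ) * deviationEnergy v := by
  set w := fun i => v i - meanVec v
  set b := fun i j => (N : ℝ)⁻¹ * a ‖x i - x j‖
  have hfield : ∀ i, perturbedCSField a α β x v Δ i
      = ∑ j, b i j • (w j - w i) + (α • (-w i) + β • Δ i) := fun i => by
    simp only [perturbedCSField, w, b, Finset.smul_sum, smul_smul, sub_sub_sub_cancel_right,
      neg_sub, add_assoc]
  have h_align : ∑ i, ⟪w i, ∑ j, b i j • (w j - w i)⟫_ℝ ≤ 0 :=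
    sum_inner_sum_smul_sub_nonpos b (fun i j => by simp only [b, norm_sub_rev])
      (fun i j => mul_nonneg (by positivity) (ha _ (norm_nonneg _))) w
  have h_rest : ∑ i, ⟪w i, α • (-w i) + β • Δ i⟫_ℝ ≤ -(αmin - βmax * ℓ) * deviationEnergy v := by
    rw [deviationEnergy, Finset.mul_sum]
    exact Finset.sum_le_sum fun i _ =>
      inner_smul_neg_add_smul_le hα hβ hβmax (hε i) (hΔ i)
  calc ∑ i, ⟪w i, perturbedCSField a α β x v Δ i⟫_ℝ
      = ∑ i, ⟪w i, ∑ j, b i j • (w j - w i)⟫_ℝ + ∑ i, ⟪w i, α • (-w i) + β • Δ i⟫_ℝ := by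
        rw [← Finset.sum_add_distrib]
        exact Finset.sum_congr rfl fun i _ => by rw [hfield, inner_add_right]
    _ ≤ -(αmin - βmax * ℓ) * deviationEnergy v := by linarith

end CuckerSmale

theorem perturbedCuckerSmale_consensus_of_bounded_deviation_general
    {d N : ℕ}
    (a : ℝ → ℝ)
    (ha_pos : ∀ r, 0 ≤ r → 0 < a r)
    (α β : ℝ → ℝ)
    (hβ : ∀ t, 0 ≤ t → 0 < β t)
    (ℓ αmin βmax : ℝ)
    (hαmin : ∀ t, 0 ≤ t → αmin ≤ α t)
    (hβmax : ∀ t, 0 ≤ t → β t ≤ βmax)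
    (hℓ : ℓ < αmin / βmax)
    (ε : Fin N → ℝ → ℝ) (hε : ∀ (i : Fin N), ∀ t, 0 ≤ t → ε i t ∈ Set.Icc 0 ℓ)
    (Δ : Fin N → ℝ → EuclideanSpace ℝ (Fin d))
    (x v : ℝ → Fin N → EuclideanSpace ℝ (Fin d))
    (hv : ∀ (i : Fin N), ∀ t, 0 ≤ t → HasDerivAt (fun s => v s i)
      ((N : ℝ)⁻¹ • ∑ j, a ‖x t i - x t j‖ • (v t j - v t i)
        + α t • (meanVec (v t) - v t i) + β t • Δ i t) t)
    (T : ℝ)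
    (hΔ : ∀ t, T ≤ t → ∀ i, ‖Δ i t‖ ≤ ε i t * ‖v t i - meanVec (v t)‖) :
    ∀ i, Tendsto (fun t => ‖v t i - meanVec (v t)‖) atTop (nhds 0) := by
  have hβmax_pos : 0 < βmax := (hβ 0 le_rfl).trans_le (hβmax 0 le_rfl)
  have hrate : 0 < αmin - βmax * ℓ := by
    rw [lt_div_iff₀ hβmax_pos] at hℓ
    linarith
  have hE : ∀ t ≥ max T 0, HasDerivAt (fun s => deviationEnergy (v s))
      (2 * ∑ i, ⟪v t i - meanVec (v t),
        perturbedCSField a (α t) (β t) (x t) (v t) (fun j => Δ j t) i⟫_ℝ) t :=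
    fun t ht => hasDerivAt_deviationEnergy fun i => hv i t (le_of_max_le_right ht)
  have hdecay : ∀ t ≥ max T 0, 2 * ∑ i, ⟪v t i - meanVec (v t),
      perturbedCSField a (α t) (β t) (x t) (v t) (fun j => Δ j t) i⟫_ℝ
        ≤ -(2 * (αmin - βmax * ℓ)) * deviationEnergy (v t) := fun t ht => by
    have ht0 := le_of_max_le_right ht
    have := sum_inner_perturbedCSField_le (x := x t) (fun r hr => (ha_pos r hr).le) (hαmin t ht0)
      (hβ t ht0).le (hβmax t ht0) (fun i => hε i t ht0) (hΔ t (le_of_max_le_left ht))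
    linarith
  have hE_lim := tendsto_zero_of_hasDerivAt_le_neg_mul (by positivity)
    (fun t => deviationEnergy_nonneg (v t)) hE hdecay
  intro i
  exact squeeze_zero (fun t => norm_nonneg _)
    (fun t => norm_sub_meanVec_le_sqrt_deviationEnergy (v t) i)
    (by simpa using hE_lim.sqrt)

/-- If after some time `T ≥ 0` the deviations satisfy
`‖Δᵢ(t)‖ ≤ εᵢ(t) ‖vᵢ^⊥(t)‖` with `εᵢ` taking values in `[0,ℓ]` and
`ℓ < (min α)/(max β)`, then the perturbed Cucker-Smale system tends to consensus. -/
theorem perturbedCuckerSmale_consensus_of_bounded_deviation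
    {d N : ℕ} (hN : 0 < N)
    (a : ℝ → ℝ)
    (ha_pos : ∀ r, 0 ≤ r → 0 < a r)
    (ha_mono : ∀ r s, 0 ≤ r → r ≤ s → a s ≤ a r)
    (ha_bdd : ∃ C, ∀ r, 0 ≤ r → a r ≤ C)
    (ha_lip : ∃ K : NNReal, LipschitzWith K a)
    (α β : ℝ → ℝ)
    (hα : ∀ t, 0 ≤ t → 0 ≤ α t) (hβ : ∀ t, 0 ≤ t → 0 < β t)
    (ℓ αmin βmax : ℝ)
    (hαmin : ∀ t, 0 ≤ t → αmin ≤ α t)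
    (hβmax : ∀ t, 0 ≤ t → β t ≤ βmax)
    (hℓ : ℓ < αmin / βmax)
    (ε : Fin N → ℝ → ℝ) (hε : ∀ (i : Fin N), ∀ t, 0 ≤ t → ε i t ∈ Set.Icc 0 ℓ)
    (Δ : Fin N → ℝ → EuclideanSpace ℝ (Fin d))
    (x v : ℝ → Fin N → EuclideanSpace ℝ (Fin d))
    (hx : ∀ (i : Fin N), ∀ t, 0 ≤ t → HasDerivAt (fun s => x s i) (v t i) t)
    (hv : ∀ (i : Fin N), ∀ t, 0 ≤ t → HasDerivAt (fun s => v s i)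
      ((N : ℝ)⁻¹ • ∑ j, a ‖x t i - x t j‖ • (v t j - v t i)
        + α t • (meanVec (v t) - v t i) + β t • Δ i t) t)
    (T : ℝ) (hT : 0 ≤ T)
    (hΔ : ∀ t, T ≤ t → ∀ i, ‖Δ i t‖ ≤ ε i t * ‖v t i - meanVec (v t)‖) :
    ∀ i, Tendsto (fun t => ‖v t i - meanVec (v t)‖) atTop (nhds 0) :=
  perturbedCuckerSmale_consensus_of_bounded_deviation_general a ha_pos α β hβ ℓ αmin βmax hαmin
    hβmax hℓ ε hε Δ x v hv T hΔ
end
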